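/- arXiv:1711.09406 — 2 statements merged into one kernel-verified Lean document; each statement's English description precedes it below -/
import Mathlib

section
/- Let p be a positive rational with √p irrational, and let x₁ = a₁ + b₁√p, …, xₙ = aₙ + bₙ√p (n ≥ 2) with all aᵢ, bᵢ ∈ ℚ and all xᵢ > 0. Suppose there exist indices i, j with (aᵢ − bᵢ√p)(aⱼ − bⱼ√p) < 0. Then for every z = e + f√p > 0 with e, f ∈ ℚ, the rectangle of aspect ratio z admits a diverse tiling by rectangles with aspect ratios x₁, …, xₙ. -/
/-- A tiling of the rectangle `[0,1] × [0,r]` by finitely many closed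
axis-parallel rectangles with positive side lengths, covering the rectangle
and having pairwise disjoint interiors. -/
structure RectTiling (r : ℝ) where
  m : ℕ
  px : Fin m → ℝ
  py : Fin m → ℝ
  w : Fin m → ℝ
  h : Fin m → ℝ
  w_pos : ∀ k, 0 < w k
  h_pos : ∀ k, 0 < h k
  cover : (Set.Icc (0:ℝ) 1 ×ˢ Set.Icc (0:ℝ) r) =
      ⋃ k, Set.Icc (px k) (px k + w k) ×ˢ Set.Icc (py k) (py k + h k)
  disj : ∀ k l, k ≠ l →
      Disjoint ((Set.Ioo (px k) (px k + w k)) ×ˢ (Set.Ioo (py k) (py k + h k)))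
               ((Set.Ioo (px l) (px l + w l)) ×ˢ (Set.Ioo (py l) (py l + h l)))

/-- Tile `k` of the tiling `T` has aspect ratio `x` (in one of the two orientations). -/
def RectTiling.ratioOK {r : ℝ} (T : RectTiling r) (k : Fin T.m) (x : ℝ) : Prop :=
  T.h k / T.w k = x ∨ T.w k / T.h k = x

/-- The rectangle of aspect ratio `r` is tileable by rectangles with aspect
ratios among `X`. -/
def Tileable (r : ℝ) {n : ℕ} (X : Fin n → ℝ) : Prop :=
  ∃ T : RectTiling r, ∀ k, ∃ i, T.ratioOK k (X i)

/-- The rectangle of aspect ratio `r` admits a *diverse* tiling by rectangles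
with aspect ratios `X 0, …, X (n-1)`: every tile has some ratio `X i`, and for
every `i` some tile has ratio `X i`. -/
def DiverselyTileable (r : ℝ) {n : ℕ} (X : Fin n → ℝ) : Prop :=
  ∃ T : RectTiling r, (∀ k, ∃ i, T.ratioOK k (X i)) ∧ (∀ i, ∃ k, T.ratioOK k (X i))

/-!
Call `r > 0` tileable by `S` if `[0,1] × [0,r]` can be tiled by rectangles whose aspect ratios
lie in `S`. Stacking and rotating tilings show that tileable ratios are closed under addition and
inversion, hence under multiplication by positive rationals. Write `x̄ = a - b√p` for the conjugate
of `x = a + b√p`. A ratio `y = c + d√p` with `ȳ > 0` makes every positive rational tileable,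
since `y + (y ȳ) / y = 2c`. A ratio `x = a + b√p` with `x̄ < 0` then makes every positive
`e + f√p` tileable as `t / ((u - a) + x) + r` with rationals `u > a` and `t, r > 0`: as
`1 / (u + b√p) = (u - b√p) / (u² - p b²)`, it suffices to take `u` close to `b√p`, on the side
for which `u² - p b²` has the sign opposite to `f`.

For diversity, write `z = z' + c ∑ Xᵢ` with `c` rational and so small that `z' > 0`; a tiling of
`z'` is stacked with tilings of each `c Xᵢ` by rectangles of ratio `Xᵢ`.
-/

namespace RectTiling

variable {r r₁ r₂ : ℝ}

theorem mem_iff (T : RectTiling r) (u v : ℝ) :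
    ((0 ≤ u ∧ u ≤ 1) ∧ 0 ≤ v ∧ v ≤ r) ↔
      ∃ k, (T.px k ≤ u ∧ u ≤ T.px k + T.w k) ∧ T.py k ≤ v ∧ v ≤ T.py k + T.h k := by
  simpa only [Set.mem_prod, Set.mem_Icc, Set.mem_iUnion] using Set.ext_iff.1 T.cover (u, v)

theorem false_of_mem_interiors (T : RectTiling r) {k l : Fin T.m} (hkl : k ≠ l) {u v : ℝ}
    (hk : (T.px k < u ∧ u < T.px k + T.w k) ∧ T.py k < v ∧ v < T.py k + T.h k)
    (hl : (T.px l < u ∧ u < T.px l + T.w l) ∧ T.py l < v ∧ v < T.py l + T.h l) : False :=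
  Set.disjoint_left.1 (T.disj k l hkl) (show (u, v) ∈ _ from hk) hl

theorem py_nonneg (T : RectTiling r) (k : Fin T.m) : 0 ≤ T.py k :=
  ((T.mem_iff (T.px k) (T.py k)).2
    ⟨k, ⟨le_rfl, by linarith [T.w_pos k]⟩, le_rfl, by linarith [T.h_pos k]⟩).2.1

theorem py_add_h_le (T : RectTiling r) (k : Fin T.m) : T.py k + T.h k ≤ r :=
  ((T.mem_iff (T.px k) (T.py k + T.h k)).2
    ⟨k, ⟨le_rfl, by linarith [T.w_pos k]⟩, by linarith [T.h_pos k], le_rfl⟩).2.2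

theorem nonempty (T : RectTiling r) (hr : 0 ≤ r) : Nonempty (Fin T.m) :=
  let ⟨k, _⟩ := (T.mem_iff 0 0).1 ⟨⟨le_rfl, zero_le_one⟩, le_rfl, hr⟩; ⟨k⟩

def single (x : ℝ) (hx : 0 < x) : RectTiling x where
  m := 1
  px _ := 0
  py _ := 0
  w _ := 1
  h _ := x
  w_pos _ := one_pos
  h_pos _ := hx
  cover := by ext; simp
  disj k l hkl := absurd (Subsingleton.elim k l) hkl

def stack (T₁ : RectTiling r₁) (T₂ : RectTiling r₂) (h₁ : 0 ≤ r₁) (h₂ : 0 ≤ r₂) :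
    RectTiling (r₁ + r₂) where
  m := T₁.m + T₂.m
  px := Fin.append T₁.px T₂.px
  py := Fin.append T₁.py (fun k => T₂.py k + r₁)
  w := Fin.append T₁.w T₂.w
  h := Fin.append T₁.h T₂.h
  w_pos := Fin.addCases (by simpa using T₁.w_pos) (by simpa using T₂.w_pos)
  h_pos := Fin.addCases (by simpa using T₁.h_pos) (by simpa using T₂.h_pos)
  cover := by
    ext ⟨u, v⟩
    simp only [Set.mem_prod, Set.mem_Icc, Set.mem_iUnion]
    constructor
    · rintro ⟨hu, hv₀, hv⟩
      rcases le_or_gt v r₁ with hv₁ | hv₁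
      · obtain ⟨k, hk⟩ := (T₁.mem_iff u v).1 ⟨hu, hv₀, hv₁⟩
        exact ⟨Fin.castAdd _ k, by simpa using hk⟩
      · obtain ⟨k, hku, hkv⟩ := (T₂.mem_iff u (v - r₁)).1 ⟨hu, by linarith, by linarith⟩
        refine ⟨Fin.natAdd _ k, by simpa using hku, ?_⟩
        simp only [Fin.append_right]
        constructor <;> linarith
    · rintro ⟨k, hk⟩
      induction k using Fin.addCases with
      | left k =>
        obtain ⟨hu, hv₀, hv⟩ := (T₁.mem_iff u v).2 ⟨k, by simpa using hk⟩
        exact ⟨hu, hv₀, by linarith⟩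
      | right k =>
        simp only [Fin.append_right] at hk
        obtain ⟨hu, hv₀, hv⟩ := (T₂.mem_iff u (v - r₁)).2
          ⟨k, hk.1, by linarith [hk.2.1], by linarith [hk.2.2]⟩
        exact ⟨hu, by linarith, by linarith⟩
  disj k l hkl := by
    refine Set.disjoint_left.2 fun ⟨u, v⟩ hk hl => ?_
    simp only [Set.mem_prod, Set.mem_Ioo] at hk hl
    induction k using Fin.addCases with
    | left k => induction l using Fin.addCases with
      | left l =>
        simp only [Fin.append_left] at hk hl
        exact T₁.false_of_mem_interiors (fun h => hkl (congrArg _ h)) hk hl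
      | right l =>
        simp only [Fin.append_left, Fin.append_right] at hk hl
        linarith [T₁.py_add_h_le k, T₂.py_nonneg l]
    | right k => induction l using Fin.addCases with
      | left l =>
        simp only [Fin.append_left, Fin.append_right] at hk hl
        linarith [T₁.py_add_h_le l, T₂.py_nonneg k]
      | right l =>
        simp only [Fin.append_right] at hk hl
        exact T₂.false_of_mem_interiors (v := v - r₁) (fun h => hkl (congrArg _ h))
          ⟨hk.1, by linarith, by linarith⟩ ⟨hl.1, by linarith, by linarith⟩

noncomputable def rotate (T : RectTiling r) (hr : 0 < r) : RectTiling r⁻¹ where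
  m := T.m
  px k := T.py k / r
  py k := T.px k / r
  w k := T.h k / r
  h k := T.w k / r
  w_pos k := div_pos (T.h_pos k) hr
  h_pos k := div_pos (T.w_pos k) hr
  cover := by
    ext ⟨u, v⟩
    have hrot := T.mem_iff (v * r) (u * r)
    simp only [Set.mem_prod, Set.mem_Icc, Set.mem_iUnion, ← add_div, inv_eq_one_div,
      div_le_iff₀ hr, le_div_iff₀ hr, mul_nonneg_iff_of_pos_right hr,
      mul_le_iff_le_one_left hr] at hrot ⊢
    rw [and_comm, hrot]
    exact exists_congr fun _ => and_comm
  disj k l hkl := by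
    refine Set.disjoint_left.2 fun ⟨u, v⟩ hk hl => ?_
    simp only [Set.mem_prod, Set.mem_Ioo, ← add_div, div_lt_iff₀ hr, lt_div_iff₀ hr] at hk hl
    exact T.false_of_mem_interiors hkl (u := v * r) (v := u * r) ⟨hk.2, hk.1⟩ ⟨hl.2, hl.1⟩

def UsesOnly (T : RectTiling r) (S : Set ℝ) : Prop :=
  ∀ k, ∃ x ∈ S, T.ratioOK k x

def HasRatio (T : RectTiling r) (x : ℝ) : Prop :=
  ∃ k, T.ratioOK k x

theorem UsesOnly.mono {T : RectTiling r} {S S' : Set ℝ} (hT : T.UsesOnly S) (hS : S ⊆ S') :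
    T.UsesOnly S' := fun k =>
  let ⟨x, hx, hk⟩ := hT k; ⟨x, hS hx, hk⟩

theorem UsesOnly.hasRatio {T : RectTiling r} {x : ℝ} (hT : T.UsesOnly {x}) (hr : 0 ≤ r) :
    T.HasRatio x :=
  let ⟨k⟩ := T.nonempty hr
  let ⟨_, rfl, hk⟩ := hT k; ⟨k, hk⟩

theorem usesOnly_single (x : ℝ) (hx : 0 < x) : (single x hx).UsesOnly {x} :=
  fun _ => ⟨x, rfl, Or.inl (div_one x)⟩

section stack

variable {T₁ : RectTiling r₁} {T₂ : RectTiling r₂} {h₁ : 0 ≤ r₁} {h₂ : 0 ≤ r₂} {x : ℝ}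

@[simp] theorem stack_ratioOK_castAdd (k : Fin T₁.m) :
    (T₁.stack T₂ h₁ h₂).ratioOK (Fin.castAdd T₂.m k) x ↔ T₁.ratioOK k x := by
  simp [stack, ratioOK]

@[simp] theorem stack_ratioOK_natAdd (k : Fin T₂.m) :
    (T₁.stack T₂ h₁ h₂).ratioOK (Fin.natAdd T₁.m k) x ↔ T₂.ratioOK k x := by
  simp [stack, ratioOK]

theorem UsesOnly.stack {S : Set ℝ} (hT₁ : T₁.UsesOnly S) (hT₂ : T₂.UsesOnly S) :
    (T₁.stack T₂ h₁ h₂).UsesOnly S :=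
  (Fin.forall_fin_add _).2 ⟨fun k => by simpa using hT₁ k, fun k => by simpa using hT₂ k⟩

theorem HasRatio.stack_left (hT₁ : T₁.HasRatio x) : (T₁.stack T₂ h₁ h₂).HasRatio x :=
  let ⟨k, hk⟩ := hT₁; ⟨Fin.castAdd _ k, by simpa using hk⟩

theorem HasRatio.stack_right (hT₂ : T₂.HasRatio x) : (T₁.stack T₂ h₁ h₂).HasRatio x :=
  let ⟨k, hk⟩ := hT₂; ⟨Fin.natAdd _ k, by simpa using hk⟩

end stack

theorem UsesOnly.rotate {T : RectTiling r} {S : Set ℝ} (hT : T.UsesOnly S) (hr : 0 < r) :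
    (T.rotate hr).UsesOnly S := fun k =>
  let ⟨x, hx, hk⟩ := hT k
  ⟨x, hx, by
    change T.w k / r / (T.h k / r) = x ∨ T.h k / r / (T.w k / r) = x
    simpa only [div_div_div_cancel_right₀ hr.ne'] using hk.symm⟩

end RectTiling

/-- The requirement `0 < r` rules out the empty tiling of `[0,1] × [0,r]` for `r < 0`. -/
def TileableBy (S : Set ℝ) (r : ℝ) : Prop :=
  0 < r ∧ ∃ T : RectTiling r, T.UsesOnly S

namespace TileableBy

variable {S : Set ℝ} {r r₁ r₂ : ℝ}

theorem of_mem {x : ℝ} (hxS : x ∈ S) (hx : 0 < x) : TileableBy S x :=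
  ⟨hx, .single x hx, (RectTiling.usesOnly_single x hx).mono (Set.singleton_subset_iff.2 hxS)⟩

theorem add (h₁ : TileableBy S r₁) (h₂ : TileableBy S r₂) : TileableBy S (r₁ + r₂) :=
  let ⟨hr₁, T₁, hT₁⟩ := h₁
  let ⟨hr₂, T₂, hT₂⟩ := h₂
  ⟨add_pos hr₁ hr₂, T₁.stack T₂ hr₁.le hr₂.le, hT₁.stack hT₂⟩

theorem inv (h : TileableBy S r) : TileableBy S r⁻¹ :=
  let ⟨hr, T, hT⟩ := h
  ⟨inv_pos.2 hr, T.rotate hr, hT.rotate hr⟩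

theorem natCast_mul (h : TileableBy S r) {m : ℕ} (hm : 0 < m) : TileableBy S (m * r) := by
  induction m, hm using Nat.le_induction with
  | base => simpa using h
  | succ m _ ih => simpa [add_mul] using ih.add h

theorem ratCast_mul (h : TileableBy S r) {q : ℚ} (hq : 0 < q) : TileableBy S (q * r) := by
  obtain ⟨a, ha⟩ := Int.eq_ofNat_of_zero_le (Rat.num_nonneg.2 hq.le)
  have ha₀ : 0 < a := by have := Rat.num_pos.2 hq; omega
  have hq_eq : (q : ℝ) * r = a * (q.den * r⁻¹)⁻¹ := by
    rw [Rat.cast_def, ha]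
    field_simp
    push_cast
    ring
  rw [hq_eq]
  exact ((h.inv.natCast_mul q.den_pos).inv.natCast_mul ha₀)

end TileableBy

section QuadraticField

variable {S : Set ℝ} {p : ℚ}

theorem sq_sub_mul_sq_eq_mul_conj (hp : 0 ≤ p) (a b : ℚ) :
    ((a ^ 2 - p * b ^ 2 : ℚ) : ℝ) = (a + b * √p) * (a - b * √p) := by
  push_cast
  linear_combination (b : ℝ) ^ 2 * Real.mul_self_sqrt (Rat.cast_nonneg.2 hp)

theorem TileableBy.ratCast_of_conj_pos (hp : 0 ≤ p) {c d : ℚ} (hyS : c + d * √p ∈ S)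
    (hy : 0 < c + d * √p) (hyc : 0 < c - d * √p) {q : ℚ} (hq : 0 < q) : TileableBy S q := by
  have hN : 0 < c ^ 2 - p * d ^ 2 := by
    exact_mod_cast (sq_sub_mul_sq_eq_mul_conj hp c d).symm ▸ mul_pos hy hyc
  have hty := TileableBy.of_mem hyS hy
  -- `y + N / y = y + ȳ = 2c`, where `N = y ȳ`
  have h2c : TileableBy S (2 * c : ℚ) := by
    convert hty.add (hty.inv.ratCast_mul hN) using 1
    rw [sq_sub_mul_sq_eq_mul_conj hp]
    field_simp
    push_cast
    ring
  have hc : 0 < 2 * c := by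
    have : (0 : ℝ) < 2 * c := by linarith
    exact_mod_cast this
  convert h2c.ratCast_mul (div_pos hq hc) using 1
  rw [← Rat.cast_mul, div_mul_cancel₀ _ hc.ne']

theorem TileableBy.of_shift (hp : 0 ≤ p) {a b e f u : ℚ} (hx : TileableBy S (a + b * √p))
    (hrat : ∀ q : ℚ, 0 < q → TileableBy S q) (hu : a < u) (hb : 0 < b)
    (hN : f * (u ^ 2 - p * b ^ 2) < 0) (hr : 0 < e * b + f * u) :
    TileableBy S (e + f * √p) := by
  have hux : TileableBy S (u + b * √p) := by
    convert (hrat (u - a) (sub_pos.2 hu)).add hx using 1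
    push_cast
    ring
  have hN₀ : ((u ^ 2 - p * b ^ 2 : ℚ) : ℝ) ≠ 0 := by
    rw [Rat.cast_ne_zero]; rintro hN₀; simp [hN₀] at hN
  have hinv : (u + b * √p)⁻¹ = (u - b * √p) / ((u ^ 2 - p * b ^ 2 : ℚ) : ℝ) := by
    rw [sq_sub_mul_sq_eq_mul_conj hp] at hN₀ ⊢
    rw [eq_div_iff hN₀, inv_mul_cancel_left₀ (left_ne_zero_of_mul hN₀)]
  -- `e + f √p = t / (u + b √p) + r` with `t = -f N / b` and `r = (e b + f u) / b`
  have ht : 0 < -f * (u ^ 2 - p * b ^ 2) / b := div_pos (by linarith) hb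
  convert (hux.inv.ratCast_mul ht).add (hrat _ (div_pos hr hb)) using 1
  rw [hinv]
  push_cast at hN₀ ⊢
  field_simp
  ring

theorem TileableBy.of_conj_neg (hp : 0 ≤ p) {a b : ℚ} (hxS : a + b * √p ∈ S)
    (hx : 0 < a + b * √p) (hxc : a - b * √p < 0) (hrat : ∀ q : ℚ, 0 < q → TileableBy S q)
    {e f : ℚ} (hz : 0 < e + f * √p) : TileableBy S (e + f * √p) := by
  have hbs : 0 < b * √p := by linarith
  have hb : 0 < b := by exact_mod_cast pos_of_mul_pos_left hbs (Real.sqrt_nonneg _)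
  have hbz : (0 : ℝ) < b * (e + f * √p) := mul_pos (by exact_mod_cast hb) hz
  have htx := TileableBy.of_mem hxS hx
  rcases lt_trichotomy f 0 with hf | rfl | hf
  · have hf' : (f : ℝ) < 0 := by exact_mod_cast hf
    obtain ⟨u, hu₁, hu₂⟩ := exists_rat_btwn
      (show b * √p < -e * b / f by rw [lt_div_iff_of_neg hf']; linarith)
    rw [lt_div_iff_of_neg hf'] at hu₂
    refine htx.of_shift hp hrat (by exact_mod_cast (by linarith : (a : ℝ) < u)) hb ?_
      (by exact_mod_cast (by linarith : (0 : ℝ) < e * b + f * u))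
    have hN : (0 : ℝ) < (u ^ 2 - p * b ^ 2 : ℚ) := by
      rw [sq_sub_mul_sq_eq_mul_conj hp]; apply mul_pos <;> linarith
    exact mul_neg_of_neg_of_pos hf (by exact_mod_cast hN)
  · simpa using hrat e (by exact_mod_cast (by simpa using hz))
  · have hf' : (0 : ℝ) < f := by exact_mod_cast hf
    have hmax : max (max (a : ℝ) (-(b * √p))) (-e * b / f) < b * √p := by
      refine max_lt (max_lt (by linarith) (by linarith)) ?_
      rw [div_lt_iff₀ hf']
      linarith
    obtain ⟨u, hu₁, hu₂⟩ := exists_rat_btwn hmax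
    simp only [max_lt_iff, div_lt_iff₀ hf'] at hu₁
    refine htx.of_shift hp hrat (by exact_mod_cast hu₁.1.1) hb ?_
      (by exact_mod_cast (by linarith : (0 : ℝ) < e * b + f * u))
    have hN : ((u ^ 2 - p * b ^ 2 : ℚ) : ℝ) < 0 := by
      rw [sq_sub_mul_sq_eq_mul_conj hp]; apply mul_neg_of_pos_of_neg <;> linarith
    exact mul_neg_of_pos_of_neg hf (by exact_mod_cast hN)

end QuadraticField

theorem diverselyTileable_add_ratCast_mul_sum {n : ℕ} {X : Fin n → ℝ} (hX : ∀ i, 0 < X i)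
    {r : ℝ} (hr : TileableBy (Set.range X) r) {c : ℚ} (hc : 0 < c) :
    DiverselyTileable (r + c * ∑ i, X i) X := by
  suffices h : ∀ t : Finset (Fin n), ∃ T : RectTiling (r + c * ∑ i ∈ t, X i),
      T.UsesOnly (Set.range X) ∧ ∀ i ∈ t, T.HasRatio (X i) by
    obtain ⟨T, hT, hTX⟩ := h Finset.univ
    refine ⟨T, fun k => ?_, fun i => hTX i (Finset.mem_univ i)⟩
    obtain ⟨_, ⟨i, rfl⟩, hk⟩ := hT k
    exact ⟨i, hk⟩
  intro t
  induction t using Finset.induction_on with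
  | empty =>
    rw [Finset.sum_empty, mul_zero, add_zero]
    simpa using hr.2
  | insert i t hi ih =>
    obtain ⟨T, hT, hTX⟩ := ih
    obtain ⟨hXi, Ti, hTi⟩ :=
      (TileableBy.of_mem (Set.mem_singleton (X i)) (hX i)).ratCast_mul hc
    have ht : 0 ≤ r + c * ∑ j ∈ t, X j :=
      add_nonneg hr.1.le (mul_nonneg (by positivity) (Finset.sum_nonneg fun j _ => (hX j).le))
    rw [Finset.sum_insert hi, show r + c * (X i + ∑ j ∈ t, X j) =
      (r + c * ∑ j ∈ t, X j) + c * X i by ring]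
    refine ⟨T.stack Ti ht hXi.le, hT.stack (hTi.mono (by simp)), ?_⟩
    simp only [Finset.forall_mem_insert]
    exact ⟨(hTi.hasRatio hXi.le).stack_right, fun j hj => (hTX j hj).stack_left⟩

theorem diverse_tiling_exists_mixed_case_general (p : ℚ) (hp : 0 < p)
    (n : ℕ) (a b : Fin n → ℚ) (X : Fin n → ℝ)
    (hX : ∀ i, X i = (a i : ℝ) + (b i : ℝ) * Real.sqrt p)
    (hXpos : ∀ i, 0 < X i)
    (hmix : ∃ i j, ((a i : ℝ) - (b i : ℝ) * Real.sqrt p) *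
        ((a j : ℝ) - (b j : ℝ) * Real.sqrt p) < 0)
    (e f : ℚ) (z : ℝ) (hz : z = (e : ℝ) + (f : ℝ) * Real.sqrt p) (hzpos : 0 < z) :
    DiverselyTileable z X := by
  obtain ⟨i, j, hi, hj⟩ : ∃ i j, a i - b i * √p < 0 ∧ 0 < a j - b j * √p := by
    obtain ⟨i, j, hij⟩ := hmix
    rcases mul_neg_iff.1 hij with ⟨hi, hj⟩ | ⟨hi, hj⟩
    exacts [⟨j, i, hj, hi⟩, ⟨i, j, hi, hj⟩]
  have htile (e f : ℚ) (hz : 0 < (e : ℝ) + f * √p) :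
      TileableBy (Set.range X) (e + f * √p) :=
    .of_conj_neg hp.le (Set.mem_range.2 ⟨i, hX i⟩) (hX i ▸ hXpos i) hi
      (fun _ ↦ .ratCast_of_conj_pos hp.le (Set.mem_range.2 ⟨j, hX j⟩) (hX j ▸ hXpos j) hj) hz
  have hsum : ∑ i, X i = ((∑ i, a i : ℚ) : ℝ) + ((∑ i, b i : ℚ) : ℝ) * √p := by
    push_cast
    simp only [hX, Finset.sum_add_distrib, Finset.sum_mul]
  have hsum_pos : 0 < ∑ i, X i := Finset.sum_pos (fun i _ => hXpos i) ⟨i, Finset.mem_univ i⟩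
  obtain ⟨c, hc₀, hc⟩ := exists_rat_btwn (div_pos hzpos hsum_pos)
  have hzr : ((e - c * ∑ i, a i : ℚ) : ℝ) + ((f - c * ∑ i, b i : ℚ) : ℝ) * √p =
      z - c * ∑ i, X i := by
    rw [hz, hsum]
    push_cast
    ring
  have hzr_pos : 0 < z - c * ∑ i, X i := sub_pos.2 ((lt_div_iff₀ hsum_pos).1 hc)
  have := diverselyTileable_add_ratCast_mul_sum hXpos (htile _ _ (hzr ▸ hzr_pos))
    (Rat.cast_pos.1 hc₀)
  rwa [hzr, sub_add_cancel] at this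

theorem diverse_tiling_exists_mixed_case (p : ℚ) (hp : 0 < p)
    (hirr : Irrational (Real.sqrt p))
    (n : ℕ) (hn : 2 ≤ n) (a b : Fin n → ℚ) (X : Fin n → ℝ)
    (hX : ∀ i, X i = (a i : ℝ) + (b i : ℝ) * Real.sqrt p)
    (hXpos : ∀ i, 0 < X i)
    (hmix : ∃ i j, ((a i : ℝ) - (b i : ℝ) * Real.sqrt p) *
        ((a j : ℝ) - (b j : ℝ) * Real.sqrt p) < 0)
    (e f : ℚ) (z : ℝ) (hz : z = (e : ℝ) + (f : ℝ) * Real.sqrt p) (hzpos : 0 < z) :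
    DiverselyTileable z X :=
  diverse_tiling_exists_mixed_case_general p hp n a b X hX hXpos hmix e f z hz hzpos
end

section
/- Let p be a positive rational with √p irrational, and let x₁ = a₁ + b₁√p, …, xₙ = aₙ + bₙ√p (n ≥ 2) with all aᵢ, bᵢ ∈ ℚ, all xᵢ > 0, and such that xᵢ/xⱼ ∉ ℚ and xᵢ·xⱼ ∉ ℚ whenever i ≠ j. Suppose aᵢ − bᵢ√p > 0 for all i, and let z = e + f√p > 0 with e, f ∈ ℚ, e > 0 and |f|/e = max_{1 ≤ i ≤ n} |bᵢ|/aᵢ. Then the rectangle of aspect ratio z admits NO diverse tiling by rectangles with aspect ratios x₁, …, xₙ. -/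
/-!
Dehn's argument: for a tiling of `[0,1] × [0,z]` and any biadditive `B : ℝ → ℝ → M`,
`∑ₖ B wₖ hₖ = B 1 z`. Let `g : ℝ → ℝ` be additive with `g ((c + d√p) x) = (c - d√p) g x`,
an additive extension of the conjugation of `ℚ(√p)`. With `yₖ = hₖ / wₖ` and `ȳ = g y`,
the four choices `B x y = x y, g x · y, x · g y, g x · g y` give
`∑ yₖ wₖ² = ∑ yₖ wₖ g(wₖ) = z` and `∑ ȳₖ g(wₖ)² = ∑ ȳₖ wₖ g(wₖ) = z̄`.
Every tile ratio is some `Xᵢ^{±1}`, and the hypothesis `|f|/e = maxᵢ |bᵢ|/aᵢ` puts all the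
`ȳₖ / yₖ` on the same side of `z̄ / z`. Comparing the two quadratic forms then forces
`ȳₖ / yₖ = z̄ / z` for every tile, i.e. every tile ratio is a rational multiple of `z`.
Two tiles with ratios `Xᵢ^{±1}`, `Xⱼ^{±1}` (`i ≠ j`) then make `Xᵢ / Xⱼ` or `Xᵢ Xⱼ` rational.
-/

open Finset

namespace Finset

variable {α : Type*} [LinearOrder α] {S : Finset α} {a b s m : α}

noncomputable def next (S : Finset α) (s : α) : α :=
  if h : {x ∈ S | s < x}.Nonempty then {x ∈ S | s < x}.min' h else s

theorem next_mem (hb : b ∈ S) (hsb : s < b) : S.next s ∈ S := by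
  have h : {x ∈ S | s < x}.Nonempty := ⟨b, mem_filter.2 ⟨hb, hsb⟩⟩
  rw [next, dif_pos h]
  exact (mem_filter.1 (min'_mem _ h)).1

theorem lt_next (hb : b ∈ S) (hsb : s < b) : s < S.next s := by
  have h : {x ∈ S | s < x}.Nonempty := ⟨b, mem_filter.2 ⟨hb, hsb⟩⟩
  rw [next, dif_pos h]
  exact (mem_filter.1 (min'_mem _ h)).2

theorem next_le (hb : b ∈ S) (hsb : s < b) : S.next s ≤ b := by
  have h : {x ∈ S | s < x}.Nonempty := ⟨b, mem_filter.2 ⟨hb, hsb⟩⟩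
  rw [next, dif_pos h]
  exact min'_le _ _ (mem_filter.2 ⟨hb, hsb⟩)

theorem le_of_lt_next (ha : a ∈ S) (h : a < S.next s) : a ≤ s :=
  not_lt.1 fun hsa => (next_le ha hsa).not_gt h

theorem mem_Ioo_of_mem_Ico_next (hb : b ∈ S) (hm : m ∈ Set.Ioo s (S.next s))
    (h : s ∈ Set.Ico a b) : m ∈ Set.Ioo a b :=
  ⟨h.1.trans_lt hm.1, hm.2.trans_le (next_le hb h.2)⟩

theorem mem_Ico_of_mem_Icc_next (ha : a ∈ S) (hm : m ∈ Set.Ioo s (S.next s))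
    (h : m ∈ Set.Icc a b) : s ∈ Set.Ico a b :=
  ⟨le_of_lt_next ha (h.1.trans_lt hm.2), hm.1.trans_le h.2⟩

theorem map_sub_eq_sum_next {β M : Type*} [AddCommGroup β] [LinearOrder β] [AddCommMonoid M]
    (F : β →+ M) {S : Finset β} {a b : β} (ha : a ∈ S) (hb : b ∈ S) (hab : a ≤ b) :
    F (b - a) = ∑ s ∈ S with s ∈ Set.Ico a b, F (S.next s - s) := by
  induction hn : #{s ∈ S | s ∈ Set.Ico a b} using Nat.strong_induction_on generalizing a with
  | _ n ih =>
  rcases hab.eq_or_lt with rfl | hlt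
  · rw [sub_self, map_zero, eq_comm, sum_eq_zero]
    intro s hs
    exact absurd (mem_filter.1 hs).2 fun h => h.1.not_gt h.2
  have hsplit : {s ∈ S | s ∈ Set.Ico a b} = insert a {s ∈ S | s ∈ Set.Ico (S.next a) b} := by
    ext s
    simp only [mem_filter, mem_insert, Set.mem_Ico]
    constructor
    · rintro ⟨hs, has, hsb⟩
      rcases has.eq_or_lt with rfl | has
      · exact .inl rfl
      · exact .inr ⟨hs, next_le hs has, hsb⟩
    · rintro (rfl | ⟨hs, has, hsb⟩)
      · exact ⟨ha, le_rfl, hlt⟩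
      · exact ⟨hs, (lt_next hb hlt).le.trans has, hsb⟩
  have hnot : a ∉ {s ∈ S | s ∈ Set.Ico (S.next a) b} := fun h =>
    (mem_filter.1 h).2.1.not_gt (lt_next hb hlt)
  rw [hsplit, sum_insert hnot, ← ih _ (by rw [← hn, hsplit, card_insert_of_notMem hnot]; omega)
    (next_mem hb hlt) (next_le hb hlt) rfl, ← map_add, sub_add_sub_cancel']

end Finset

noncomputable def endpoints {m : ℕ} (P W : Fin m → ℝ) (c : ℝ) : Finset ℝ :=
  {0, c} ∪ univ.image P ∪ univ.image (P + W)

namespace RectTiling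

variable {r : ℝ} (T : RectTiling r)

theorem ratioOK_iff (k : Fin T.m) (x : ℝ) :
    T.ratioOK k x ↔ T.h k / T.w k = x ∨ (T.h k / T.w k)⁻¹ = x := by
  rw [ratioOK, inv_div]

theorem Ico_subset (k : Fin T.m) :
    Set.Ico (T.px k) (T.px k + T.w k) ⊆ Set.Ico 0 1 ∧
      Set.Ico (T.py k) (T.py k + T.h k) ⊆ Set.Ico 0 r := by
  have hw := T.w_pos k
  have hh := T.h_pos k
  have hsub := T.cover ▸ Set.subset_iUnion
    (fun k => Set.Icc (T.px k) (T.px k + T.w k) ×ˢ Set.Icc (T.py k) (T.py k + T.h k)) k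
  obtain ⟨hx, hy⟩ : _ ∧ _ := (Set.prod_subset_prod_iff.1 hsub).resolve_right (by
    simp only [Set.Icc_eq_empty_iff, not_or, not_not]; constructor <;> linarith)
  rw [Set.Icc_subset_Icc_iff (by linarith)] at hx hy
  exact ⟨Set.Ico_subset_Ico hx.1 hx.2, Set.Ico_subset_Ico hy.1 hy.2⟩

/-- `(s, t)` lies in the same half-open tiles as the centre of the grid cell `[s, s⁺) × [t, t⁺)`
cut out by the tile edges, and that centre is covered but lies on no tile edge. -/
theorem existsUnique_tile {s t : ℝ} (hs : s ∈ Set.Ico 0 1) (ht : t ∈ Set.Ico 0 r) :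
    ∃! k, s ∈ Set.Ico (T.px k) (T.px k + T.w k) ∧ t ∈ Set.Ico (T.py k) (T.py k + T.h k) := by
  set Sx := endpoints T.px T.w 1
  set Sy := endpoints T.py T.h r
  have hx := lt_next (S := Sx) (by simp [Sx, endpoints]) hs.2
  have hy := lt_next (S := Sy) (by simp [Sy, endpoints]) ht.2
  have hx1 := next_le (S := Sx) (by simp [Sx, endpoints]) hs.2
  have hy1 := next_le (S := Sy) (by simp [Sy, endpoints]) ht.2
  have hmx : (s + Sx.next s) / 2 ∈ Set.Ioo s (Sx.next s) := ⟨by linarith, by linarith⟩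
  have hmy : (t + Sy.next t) / 2 ∈ Set.Ioo t (Sy.next t) := ⟨by linarith, by linarith⟩
  have hcover : ((s + Sx.next s) / 2, (t + Sy.next t) / 2) ∈ Set.Icc (0 : ℝ) 1 ×ˢ Set.Icc 0 r :=
    ⟨⟨by linarith [hs.1], hx1.trans' hmx.2.le⟩, ⟨by linarith [ht.1], hy1.trans' hmy.2.le⟩⟩
  rw [T.cover, Set.mem_iUnion] at hcover
  obtain ⟨k, hkx, hky⟩ := hcover
  have hinterior : ∀ l, s ∈ Set.Ico (T.px l) (T.px l + T.w l) ∧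
      t ∈ Set.Ico (T.py l) (T.py l + T.h l) →
      ((s + Sx.next s) / 2, (t + Sy.next t) / 2) ∈
        Set.Ioo (T.px l) (T.px l + T.w l) ×ˢ Set.Ioo (T.py l) (T.py l + T.h l) :=
    fun l hl => ⟨mem_Ioo_of_mem_Ico_next (by simp [Sx, endpoints]) hmx hl.1,
      mem_Ioo_of_mem_Ico_next (by simp [Sy, endpoints]) hmy hl.2⟩
  have hk : s ∈ Set.Ico (T.px k) (T.px k + T.w k) ∧ t ∈ Set.Ico (T.py k) (T.py k + T.h k) :=
    ⟨mem_Ico_of_mem_Icc_next (by simp [Sx, endpoints]) hmx hkx,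
      mem_Ico_of_mem_Icc_next (by simp [Sy, endpoints]) hmy hky⟩
  refine ⟨k, hk, fun l hl => ?_⟩
  by_contra hlk
  exact Set.disjoint_left.1 (T.disj l k hlk) (hinterior l hl) (hinterior k hk)

theorem sum_apply_sides {M : Type*} [AddCommMonoid M] (hr : 0 ≤ r) (B : ℝ →+ ℝ →+ M) :
    ∑ k, B (T.w k) (T.h k) = B 1 r := by
  set Sx := endpoints T.px T.w 1
  set Sy := endpoints T.py T.h r
  set φ : ℝ × ℝ → M := fun q => B (Sx.next q.1 - q.1) (Sy.next q.2 - q.2)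
  set cells := {s ∈ Sx | s ∈ Set.Ico 0 1} ×ˢ {t ∈ Sy | t ∈ Set.Ico 0 r}
  have hSx : ∀ k, T.px k ∈ Sx ∧ T.px k + T.w k ∈ Sx := fun k => by simp [Sx, endpoints]
  have hSy : ∀ k, T.py k ∈ Sy ∧ T.py k + T.h k ∈ Sy := fun k => by simp [Sy, endpoints]
  have htile : ∀ k, B (T.w k) (T.h k) = ∑ q ∈ cells,
      if q.1 ∈ Set.Ico (T.px k) (T.px k + T.w k) ∧ q.2 ∈ Set.Ico (T.py k) (T.py k + T.h k)
      then φ q else 0 := by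
    intro k
    have hw := map_sub_eq_sum_next B (hSx k).1 (hSx k).2 (le_add_of_nonneg_right (T.w_pos k).le)
    have hh := fun x => map_sub_eq_sum_next (B x) (hSy k).1 (hSy k).2
      (le_add_of_nonneg_right (T.h_pos k).le)
    simp only [add_sub_cancel_left] at hw hh
    rw [← sum_filter, filter_product (p := fun s => s ∈ Set.Ico (T.px k) (T.px k + T.w k))
      (q := fun t => t ∈ Set.Ico (T.py k) (T.py k + T.h k)), filter_filter, filter_filter,
      sum_product, hw, AddMonoidHom.finsetSum_apply,
      filter_congr fun s _ => and_iff_right_of_imp fun h => (T.Ico_subset k).1 h,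
      filter_congr fun t _ => and_iff_right_of_imp fun h => (T.Ico_subset k).2 h]
    exact sum_congr rfl fun s _ => hh _
  have hcell : ∀ q ∈ cells, ∑ k, (if q.1 ∈ Set.Ico (T.px k) (T.px k + T.w k) ∧
      q.2 ∈ Set.Ico (T.py k) (T.py k + T.h k) then φ q else 0) = φ q := by
    intro q hq
    simp only [cells, mem_product, mem_filter] at hq
    obtain ⟨k, hk, huniq⟩ := T.existsUnique_tile hq.1.2 hq.2.2
    rw [Fintype.sum_eq_single k fun l hl => if_neg fun h => hl (huniq l h), if_pos hk]
  have h1 := map_sub_eq_sum_next B (S := Sx) (by simp [Sx, endpoints])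
    (by simp [Sx, endpoints]) zero_le_one
  have hr' := fun x => map_sub_eq_sum_next (B x) (S := Sy) (by simp [Sy, endpoints])
    (by simp [Sy, endpoints]) hr
  simp only [sub_zero] at h1 hr'
  rw [sum_congr rfl fun k _ => htile k, sum_comm, sum_product, h1,
    AddMonoidHom.finsetSum_apply]
  exact sum_congr rfl fun s hs => (hr' _ ▸
    sum_congr rfl fun t ht => hcell (s, t) (mem_product.2 ⟨hs, ht⟩))

theorem sum_map_mul_map (hr : 0 ≤ r) (F G : ℝ →+ ℝ) :
    ∑ k, F (T.w k) * G (T.h k) = F 1 * G r := by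
  simpa using T.sum_apply_sides hr ((AddMonoidHom.mul.comp F).compl₂ G)

end RectTiling

theorem mul_eq_mul_of_sum_mul_sq {ι : Type*} [Fintype ι] {α β u v : ι → ℝ} {A B : ℝ}
    (hα : ∀ k, 0 < α k) (hB : 0 < B) (hle : ∀ k, α k * B ≤ β k * A)
    (huu : ∑ k, α k * u k ^ 2 = A) (huv : ∑ k, α k * u k * v k = A)
    (hvv : ∑ k, β k * v k ^ 2 = B) (k : ι) (hk : u k ≠ 0 ∨ v k ≠ 0) :
    α k * B = β k * A := by
  set Q := ∑ k, α k * v k ^ 2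
  -- `Q ≥ A` by the first sum and `B Q ≤ A B` by the second, so both vanish termwise.
  have hdist : ∑ k, α k * (v k - u k) ^ 2 = Q - A := calc
    _ = ∑ k, (α k * v k ^ 2 - 2 * (α k * u k * v k) + α k * u k ^ 2) :=
      sum_congr rfl fun k _ => by ring
    _ = Q - 2 * A + A := by rw [sum_add_distrib, sum_sub_distrib, ← mul_sum, huu, huv]
    _ = Q - A := by ring
  have hgap : ∑ k, (β k * A - α k * B) * v k ^ 2 = A * B - B * Q := calc
    _ = ∑ k, (A * (β k * v k ^ 2) - B * (α k * v k ^ 2)) := sum_congr rfl fun k _ => by ring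
    _ = A * B - B * Q := by rw [sum_sub_distrib, ← mul_sum, ← mul_sum, hvv]
  have hdist_nonneg : ∀ k, 0 ≤ α k * (v k - u k) ^ 2 := fun k => by have := hα k; positivity
  have hgap_nonneg : ∀ k, 0 ≤ (β k * A - α k * B) * v k ^ 2 := fun k =>
    mul_nonneg (sub_nonneg.2 (hle k)) (sq_nonneg _)
  have hQ : Q = A := by
    have h1 := sum_nonneg fun k (_ : k ∈ univ) => hdist_nonneg k
    have h2 := sum_nonneg fun k (_ : k ∈ univ) => hgap_nonneg k
    rw [hdist] at h1
    rw [hgap] at h2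
    nlinarith
  have hvu : v k = u k := by
    have := (sum_eq_zero_iff_of_nonneg fun k _ => hdist_nonneg k).1
      (by rw [hdist, hQ, sub_self]) k (mem_univ k)
    simpa [(hα k).ne', sub_eq_zero] using this
  have hv : v k ≠ 0 := hk.elim (hvu ▸ ·) id
  have := (sum_eq_zero_iff_of_nonneg fun k _ => hgap_nonneg k).1
    (by rw [hgap, hQ, mul_comm, sub_self]) k (mem_univ k)
  simpa [hv, sub_eq_zero, eq_comm] using this

namespace RectTiling

variable {z : ℝ} (T : RectTiling z)

theorem ratio_mul_map_eq (hz : 0 < z) {g : ℝ →+ ℝ} (hg1 : g 1 = 1) (hgz : 0 < g z)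
    (hmul : ∀ k, g (T.h k) = g (T.h k / T.w k) * g (T.w k)) (hpos : ∀ k, 0 < g (T.h k / T.w k))
    (hside : (∀ k, T.h k / T.w k * g z ≤ g (T.h k / T.w k) * z) ∨
      ∀ k, g (T.h k / T.w k) * z ≤ T.h k / T.w k * g z) (k : Fin T.m) :
    T.h k / T.w k * g z = g (T.h k / T.w k) * z := by
  have hid := T.sum_map_mul_map hz.le (.id ℝ) (.id ℝ)
  have hgg := T.sum_map_mul_map hz.le g g
  have hg_id := T.sum_map_mul_map hz.le g (.id ℝ)
  have hid_g := T.sum_map_mul_map hz.le (.id ℝ) g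
  simp only [AddMonoidHom.id_apply, hg1, one_mul] at hid hgg hg_id hid_g
  have hw : ∀ k, T.w k ≠ 0 := fun k => (T.w_pos k).ne'
  -- the roles of `(y, w, z)` and `(g y, g w, g z)` are exchanged between the two cases
  rcases hside with hle | hle
  · refine mul_eq_mul_of_sum_mul_sq (v := fun k => g (T.w k))
      (fun k => div_pos (T.h_pos k) (T.w_pos k)) hgz hle ?_ ?_ ?_ k (.inl (hw k))
    · exact (sum_congr rfl fun k _ => by field_simp [hw k]).trans hid
    · exact (sum_congr rfl fun k _ => by field_simp [hw k]).trans hg_id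
    · exact (sum_congr rfl fun k _ => by rw [hmul k]; ring).trans hgg
  · refine (mul_eq_mul_of_sum_mul_sq (u := fun k => g (T.w k)) hpos hz hle ?_ ?_ ?_ k
      (.inr (hw k))).symm
    · exact (sum_congr rfl fun k _ => by rw [hmul k]; ring).trans hgg
    · exact (sum_congr rfl fun k _ => by rw [hmul k]; ring).trans hid_g
    · exact (sum_congr rfl fun k _ => by field_simp [hw k]).trans hid

end RectTiling

theorem exists_addMonoidHom_map_mul_eq {K L M : Type*} [Field K] [CommRing L] [Nontrivial L]
    [Semiring M] (φ : K →+* L) (σ : K →+* M) :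
    ∃ g : L →+ M, g 1 = 1 ∧ ∀ y x, g (φ y * x) = σ y * g x := by
  let := φ.toAlgebra
  obtain ⟨π, hπ⟩ := (Algebra.linearMap K L).exists_leftInverse_of_injective
    (LinearMap.ker_eq_bot.2 φ.injective)
  have hπ1 : π 1 = 1 := by simpa using LinearMap.congr_fun hπ 1
  refine ⟨σ.toAddMonoidHom.comp π.toAddMonoidHom, by simp [hπ1], fun y x => ?_⟩
  have : φ y * x = y • x := (Algebra.smul_def y x).symm
  simp [this]

structure IsSqrtConj (p : ℚ) (g : ℝ →+ ℝ) : Prop where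
  map_one : g 1 = 1
  map_mul : ∀ (c d : ℚ) (x : ℝ), g ((c + d * √p) * x) = (c - d * √p) * g x

open Polynomial in
theorem exists_isSqrtConj {p : ℚ} (hirr : Irrational √p) : ∃ g, IsSqrtConj p g := by
  obtain ⟨hsq, hp⟩ := irrational_sqrt_ratCast_iff.1 hirr
  have : Fact (Irreducible (X ^ 2 - C p)) :=
    ⟨X_pow_sub_C_irreducible_of_prime Nat.prime_two fun b hb => hsq ⟨b, by rw [← hb, sq]⟩⟩
  have hroot : ∀ c : ℝ, c ^ 2 = p → (X ^ 2 - C p).eval₂ (algebraMap ℚ ℝ) c = 0 := by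
    intro c hc
    simp [hc]
  have hsqrt : √(p : ℝ) ^ 2 = p := Real.sq_sqrt (by exact_mod_cast hp)
  obtain ⟨g, hg1, hg⟩ := exists_addMonoidHom_map_mul_eq
    (AdjoinRoot.lift _ _ (hroot _ hsqrt)) (AdjoinRoot.lift _ _ (hroot (-√p) (by rwa [neg_sq])))
  refine ⟨g, hg1, fun c d x => ?_⟩
  have := hg (.of _ c + .of _ d * AdjoinRoot.root _) x
  simp only [map_add, map_mul, AdjoinRoot.lift_of, AdjoinRoot.lift_root] at this
  simpa [sub_eq_add_neg] using this

theorem IsSqrtConj.map_add_mul_sqrt {p : ℚ} {g : ℝ →+ ℝ} (hg : IsSqrtConj p g) (c d : ℚ) :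
    g (c + d * √p) = c - d * √p := by
  simpa [hg.map_one] using hg.map_mul c d 1

theorem sub_mul_sqrt_pos {p c d e f : ℚ} (h₁ : 0 < c + d * √p) (h₂ : 0 < c - d * √p)
    (he : 0 < e) (h : |f| / e ≤ |d| / c) : 0 < e - f * √p := by
  have hc : (0 : ℝ) < c := by linarith
  rw [div_le_div_iff₀ he (by exact_mod_cast hc)] at h
  have hs := Real.sqrt_nonneg p
  have hds : |(d : ℝ)| * √p < c := by
    rw [← abs_of_nonneg hs, ← abs_mul, abs_lt]
    constructor <;> linarith
  have h' : |(f : ℝ)| * c ≤ |(d : ℝ)| * e := by exact_mod_cast h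
  have he' : (0 : ℝ) < e := by exact_mod_cast he
  have hfs : f * √p ≤ |(f : ℝ)| * √p := mul_le_mul_of_nonneg_right (le_abs_self _) hs
  nlinarith [abs_nonneg (f : ℝ), abs_nonneg (d : ℝ)]

/-- The slope `|d| / c` of `y = c + d√p` is at most the slope `|f| / e` of `e + f√p`. -/
def SlopeBounded (p e f : ℚ) (y : ℝ) : Prop :=
  ∃ c d : ℚ, y = c + d * √p ∧ 0 < c - d * √p ∧ |d| * e ≤ |f| * c

namespace SlopeBounded

variable {p e f : ℚ} {y : ℝ} {g : ℝ →+ ℝ}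

theorem of_abs_div_le {c d : ℚ} (h₁ : 0 < c + d * √p) (h₂ : 0 < c - d * √p) (he : 0 < e)
    (h : |d| / c ≤ |f| / e) : SlopeBounded p e f (c + d * √p) := by
  have hc : (0 : ℝ) < c := by linarith
  exact ⟨c, d, rfl, h₂, (div_le_div_iff₀ (by exact_mod_cast hc) he).1 h⟩

theorem inv (hp : 0 ≤ p) (hy : 0 < y) (h : SlopeBounded p e f y) : SlopeBounded p e f y⁻¹ := by
  obtain ⟨c, d, rfl, hconj, hcd⟩ := h
  set N := c ^ 2 - d ^ 2 * p
  have hnorm : (N : ℝ) = (c + d * √p) * (c - d * √p) := by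
    simp only [N]
    push_cast
    linear_combination (d : ℝ) ^ 2 * Real.sq_sqrt (Rat.cast_nonneg.2 hp)
  have hN : (0 : ℝ) < N := hnorm ▸ mul_pos hy hconj
  refine ⟨c / N, -d / N, ?_, ?_, ?_⟩
  · calc (c + d * √p)⁻¹ = (c - d * √p) / N := by
          rw [hnorm, div_mul_cancel_right₀ hconj.ne']
      _ = _ := by push_cast; ring
  · calc (0 : ℝ) < (c + d * √p) / N := div_pos hy hN
      _ = _ := by push_cast; ring
  · rw [abs_div, abs_neg, abs_of_pos (Rat.cast_pos.1 hN), div_mul_eq_mul_div, mul_div_assoc']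
    exact div_le_div_of_nonneg_right hcd (Rat.cast_pos.1 hN).le

theorem map_mul (hg : IsSqrtConj p g) (h : SlopeBounded p e f y) (x : ℝ) :
    g (y * x) = g y * g x := by
  obtain ⟨c, d, rfl, -⟩ := h
  rw [hg.map_mul, hg.map_add_mul_sqrt]

theorem map_pos (hg : IsSqrtConj p g) (h : SlopeBounded p e f y) : 0 < g y := by
  obtain ⟨c, d, rfl, hconj, -⟩ := h
  rwa [hg.map_add_mul_sqrt]

theorem mul_map_le_map_mul (hg : IsSqrtConj p g) (he : 0 ≤ e) (hf : 0 ≤ f)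
    (h : SlopeBounded p e f y) : y * g (e + f * √p) ≤ g y * (e + f * √p) := by
  obtain ⟨c, d, rfl, -, hcd⟩ := h
  rw [abs_of_nonneg hf] at hcd
  have hde : d * e ≤ c * f := by nlinarith [le_abs_self d]
  rw [hg.map_add_mul_sqrt, hg.map_add_mul_sqrt, ← sub_nonneg]
  calc (0 : ℝ) ≤ 2 * √p * (c * f - d * e) :=
        mul_nonneg (by positivity) (sub_nonneg.2 (by exact_mod_cast hde))
    _ = _ := by ring

theorem map_mul_le_mul_map (hg : IsSqrtConj p g) (he : 0 ≤ e) (hf : f ≤ 0)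
    (h : SlopeBounded p e f y) : g y * (e + f * √p) ≤ y * g (e + f * √p) := by
  obtain ⟨c, d, rfl, -, hcd⟩ := h
  rw [abs_of_nonpos hf] at hcd
  have hde : c * f ≤ d * e := by nlinarith [neg_abs_le d]
  rw [hg.map_add_mul_sqrt, hg.map_add_mul_sqrt, ← sub_nonneg]
  calc (0 : ℝ) ≤ 2 * √p * (d * e - c * f) :=
        mul_nonneg (by positivity) (sub_nonneg.2 (by exact_mod_cast hde))
    _ = _ := by ring

theorem exists_rat_mul (hg : IsSqrtConj p g) (hp : 0 < p) (he : e ≠ 0) (h : SlopeBounded p e f y)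
    (heq : y * g (e + f * √p) = g y * (e + f * √p)) : ∃ q : ℚ, y = q * (e + f * √p) := by
  obtain ⟨c, d, rfl, -⟩ := h
  rw [hg.map_add_mul_sqrt, hg.map_add_mul_sqrt] at heq
  have hs : √(p : ℝ) ≠ 0 := (Real.sqrt_pos.2 (by exact_mod_cast hp)).ne'
  have hcd : (d : ℝ) * e = c * f := by
    have : 2 * √p * (d * e - c * f) = 0 := by linear_combination heq
    simpa [hs, sub_eq_zero] using this
  have he' : (e : ℝ) ≠ 0 := by exact_mod_cast he
  refine ⟨c / e, ?_⟩
  push_cast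
  field_simp
  linear_combination √p * hcd

end SlopeBounded

namespace RectTiling

variable {p e f : ℚ} (T : RectTiling (e + f * √p))

theorem slopeBounded_ratio (hp : 0 ≤ p) {n : ℕ} {X : Fin n → ℝ} (hXpos : ∀ i, 0 < X i)
    (hX : ∀ i, SlopeBounded p e f (X i)) (htile : ∀ k, ∃ i, T.ratioOK k (X i)) (k : Fin T.m) :
    SlopeBounded p e f (T.h k / T.w k) := by
  obtain ⟨i, hi | hi⟩ := (htile k).imp fun i => (T.ratioOK_iff k _).1
  · exact hi ▸ hX i
  · simpa [← hi] using (hX i).inv hp (hXpos i)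

theorem exists_rat_mul_of_slopeBounded (hirr : Irrational √p) (hp : 0 < p) (he : 0 < e)
    (hz : 0 < e + f * √p) (hz' : 0 < e - f * √p) (hb : ∀ k, SlopeBounded p e f (T.h k / T.w k))
    (k : Fin T.m) : ∃ q : ℚ, T.h k / T.w k = q * (e + f * √p) := by
  obtain ⟨g, hg⟩ := exists_isSqrtConj hirr
  refine (hb k).exists_rat_mul hg hp he.ne' (T.ratio_mul_map_eq hz hg.map_one
    (hg.map_add_mul_sqrt e f ▸ hz')
    (fun k => by rw [← (hb k).map_mul hg, div_mul_cancel₀ _ (T.w_pos k).ne'])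
    (fun k => (hb k).map_pos hg) ?_ k)
  exact (le_total 0 f).imp (fun hf k => (hb k).mul_map_le_map_mul hg he.le hf)
    (fun hf k => (hb k).map_mul_le_mul_map hg he.le hf)

end RectTiling

theorem Irrational.div_of_eq_or_inv_eq {x y X Y : ℝ} (hx : x = X ∨ x⁻¹ = X)
    (hy : y = Y ∨ y⁻¹ = Y) (hdiv : Irrational (X / Y)) (hmul : Irrational (X * Y)) :
    Irrational (x / y) := by
  rcases hx with rfl | rfl <;> rcases hy with rfl | rfl
  · exact hdiv
  · rwa [div_eq_mul_inv]
  · simpa [div_eq_mul_inv, mul_comm] using hmul.inv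
  · simpa [div_eq_mul_inv, mul_comm] using hdiv.inv

theorem no_diverse_tiling_pos_conj_boundary (p : ℚ) (hp : 0 < p)
    (hirr : Irrational (Real.sqrt p))
    (n : ℕ) (hn : 2 ≤ n) (a b : Fin n → ℚ) (X : Fin n → ℝ)
    (hX : ∀ i, X i = (a i : ℝ) + (b i : ℝ) * Real.sqrt p)
    (hXpos : ∀ i, 0 < X i)
    (hdist : ∀ i j, i ≠ j → Irrational (X i / X j) ∧ Irrational (X i * X j))
    (hconj : ∀ i, 0 < (a i : ℝ) - (b i : ℝ) * Real.sqrt p)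
    (e f : ℚ) (z : ℝ) (hz : z = (e : ℝ) + (f : ℝ) * Real.sqrt p) (hzpos : 0 < z)
    (he : 0 < e)
    (hf : |f| / e = Finset.univ.sup' ⟨⟨0, by omega⟩, Finset.mem_univ _⟩
        (fun i => |b i| / a i)) :
    ¬ DiverselyTileable z X := by
  rintro ⟨T, htile, hdiverse⟩
  subst hz
  have hX' : ∀ i, SlopeBounded p e f (X i) := fun i => hX i ▸
    .of_abs_div_le (hX i ▸ hXpos i) (hconj i) he (hf ▸ le_sup' (fun i => |b i| / a i) (mem_univ i))
  have hz' : 0 < e - f * √p := by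
    obtain ⟨m, -, hm⟩ := exists_mem_eq_sup' ⟨⟨0, by omega⟩, mem_univ _⟩ (fun i => |b i| / a i)
    exact sub_mul_sqrt_pos (hX m ▸ hXpos m) (hconj m) he (hf.trans hm).le
  have hrat := T.exists_rat_mul_of_slopeBounded hirr hp he hzpos hz'
    (T.slopeBounded_ratio hp.le hXpos hX' htile)
  have h01 : (⟨0, by omega⟩ : Fin n) ≠ ⟨1, by omega⟩ := by simp
  obtain ⟨k₀, hk₀⟩ := hdiverse ⟨0, by omega⟩
  obtain ⟨k₁, hk₁⟩ := hdiverse ⟨1, by omega⟩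
  obtain ⟨q₀, hq₀⟩ := hrat k₀
  obtain ⟨q₁, hq₁⟩ := hrat k₁
  have hirr' := Irrational.div_of_eq_or_inv_eq ((T.ratioOK_iff k₀ _).1 hk₀)
    ((T.ratioOK_iff k₁ _).1 hk₁) (hdist _ _ h01).1 (hdist _ _ h01).2
  rw [hq₀, hq₁, mul_div_mul_right _ _ hzpos.ne'] at hirr'
  exact Rat.not_irrational (q₀ / q₁) (by exact_mod_cast hirr')
end
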